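/- arXiv:2601.12998 — 5 statements merged into one kernel-verified Lean document; each statement's English description precedes it below -/
import Mathlib

section
/- For any linear code C with minimum weighted-Hamming distance d_λ(C) and error-correction capability t_λ(C), it holds that ⌊(d_λ(C)−1)/2⌋ ≤ t_λ(C) ≤ ⌊(d_λ(C)+λ_m)/2⌋ − 1, where λ_m is the largest scaling coefficient. -/
/-!
Lower bound: for every split `c = r + (c - r)` the triangle inequality gives
`w_λ(c) ≤ 2 max {w_λ(r), w_λ(c - r)}`, so `d_λ(C) ≤ w_λ(c) ≤ 2 (τ_λ(c) + 1)` for each nonzero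
codeword `c`.

Upper bound: `w_λ(c)` is the sum of `λ_ℓ` over the support positions `(ℓ, i)` of `c`, each term
at most `λ_m`. Keeping greedily chosen support positions of a minimum-weight codeword `c` yields
a subvector `r` with `T - λ_m < w_λ(r) ≤ T`, where `T = ⌊(d_λ(C) + λ_m)/2⌋`; then
`w_λ(c - r) = d_λ(C) - w_λ(r) ≤ T` too, so `τ_λ(c) + 1 ≤ T`.
-/

variable {F : Type} [Field F] [Fintype F] [DecidableEq F]

/-- Weighted-Hamming weight of a block-partitioned vector. -/
def wL {m : ℕ} (n : Fin m → ℕ) (lam : Fin m → ℕ) (a : ∀ ℓ, Fin (n ℓ) → F) : ℕ :=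
  ∑ ℓ, lam ℓ * hammingNorm (a ℓ)

/-- `τ_λ(c) + 1`: minimum over `r` of `max {w_λ(r), w_λ(c − r)}`. -/
noncomputable def tauAux {m : ℕ} (n lam : Fin m → ℕ) (c : ∀ ℓ, Fin (n ℓ) → F) : ℕ :=
  sInf {x | ∃ r : ∀ ℓ, Fin (n ℓ) → F, x = max (wL n lam r) (wL n lam (c - r))}

/-- Error-correction radius `τ_λ(c)`. -/
noncomputable def tau {m : ℕ} (n lam : Fin m → ℕ) (c : ∀ ℓ, Fin (n ℓ) → F) : ℕ :=
  tauAux n lam c - 1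

/-- Weighted-Hamming ball of radius `t`. -/
def ball {m : ℕ} (n lam : Fin m → ℕ) (t : ℕ) : Set (∀ ℓ, Fin (n ℓ) → F) :=
  {x | wL n lam x ≤ t}

/-- Difference set of the weighted-Hamming ball of radius `t`. -/
def dball {m : ℕ} (n lam : Fin m → ℕ) (t : ℕ) : Set (∀ ℓ, Fin (n ℓ) → F) :=
  {z | ∃ x ∈ ball n lam t, ∃ y ∈ ball n lam t, z = x - y}

/-- Minimum weighted-Hamming distance of a linear code. -/
noncomputable def dL {m : ℕ} (n lam : Fin m → ℕ) (C : Submodule F (∀ ℓ, Fin (n ℓ) → F)) : ℕ :=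
  sInf {x | ∃ c ∈ C, c ≠ 0 ∧ x = wL n lam c}

/-- Error-correction capability of a linear code. -/
noncomputable def tL {m : ℕ} (n lam : Fin m → ℕ) (C : Submodule F (∀ ℓ, Fin (n ℓ) → F)) : ℕ :=
  sInf {x | ∃ c ∈ C, c ≠ 0 ∧ x = tau n lam c}

theorem hammingNorm_le_add_hammingNorm_sub {ι : Type*} {β : ι → Type*} [Fintype ι]
    [∀ i, DecidableEq (β i)] [∀ i, AddCommGroup (β i)] (x y : ∀ i, β i) :
    hammingNorm x ≤ hammingNorm y + hammingNorm (x - y) := by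
  have h := hammingDist_triangle 0 y x
  rwa [hammingDist_zero_left, hammingDist_eq_hammingNorm, neg_add_eq_sub] at h

theorem Finset.exists_subset_sum_le_lt_sum_add {α M : Type*} [DecidableEq α] [AddCommMonoid M]
    [LinearOrder M] [IsOrderedAddMonoid M] [CanonicallyOrderedAdd M] (f : α → M) {L t : M}
    (s : Finset α) (hf : ∀ a ∈ s, f a ≤ L) (ht : t < ∑ a ∈ s, f a + L) :
    ∃ S ⊆ s, ∑ a ∈ S, f a ≤ t ∧ t < ∑ a ∈ S, f a + L := by
  induction s using Finset.induction_on with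
  | empty => exact ⟨∅, subset_rfl, by simp, ht⟩
  | insert a s ha ih =>
    by_cases hs : t < ∑ x ∈ s, f x + L
    · obtain ⟨S, hSs, hS⟩ := ih (fun x hx => hf x (mem_insert_of_mem hx)) hs
      exact ⟨S, hSs.trans (subset_insert a s), hS⟩
    · refine ⟨insert a s, subset_rfl, ?_, ht⟩
      rw [sum_insert ha]
      exact (add_le_add_left (hf a (mem_insert_self a s)) _).trans
        (add_comm L _ ▸ not_lt.mp hs)

section WeightedHamming

variable {F : Type} [Field F] [DecidableEq F] {m : ℕ} (n lam : Fin m → ℕ)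

theorem wL_le_add_wL_sub (a b : ∀ ℓ, Fin (n ℓ) → F) :
    wL n lam a ≤ wL n lam b + wL n lam (a - b) := by
  simp only [wL, ← Finset.sum_add_distrib, ← Nat.mul_add]
  exact Finset.sum_le_sum fun ℓ _ =>
    Nat.mul_le_mul_left _ (hammingNorm_le_add_hammingNorm_sub (a ℓ) (b ℓ))

def blockSupport (a : ∀ ℓ, Fin (n ℓ) → F) : Finset (Σ ℓ, Fin (n ℓ)) :=
  {p | a p.1 p.2 ≠ 0}

def blockRestrict (a : ∀ ℓ, Fin (n ℓ) → F) (S : Finset (Σ ℓ, Fin (n ℓ))) :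
    ∀ ℓ, Fin (n ℓ) → F :=
  fun ℓ i => if ⟨ℓ, i⟩ ∈ S then a ℓ i else 0

theorem wL_eq_sum_blockSupport (a : ∀ ℓ, Fin (n ℓ) → F) :
    wL n lam a = ∑ p ∈ blockSupport n a, lam p.1 := by
  rw [blockSupport, Finset.sum_filter, ← Finset.univ_sigma_univ, Finset.sum_sigma, wL]
  refine Finset.sum_congr rfl fun ℓ _ => ?_
  rw [hammingNorm, ← Finset.sum_filter, Finset.card_eq_sum_ones, Finset.mul_sum, mul_one]

theorem blockSupport_blockRestrict (a : ∀ ℓ, Fin (n ℓ) → F) (S : Finset (Σ ℓ, Fin (n ℓ))) :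
    blockSupport n (blockRestrict n a S) = (blockSupport n a).filter (· ∈ S) := by
  ext p
  by_cases hp : p ∈ S <;> simp [blockSupport, blockRestrict, hp]

theorem blockSupport_sub_blockRestrict (a : ∀ ℓ, Fin (n ℓ) → F) (S : Finset (Σ ℓ, Fin (n ℓ))) :
    blockSupport n (a - blockRestrict n a S) = (blockSupport n a).filter (· ∉ S) := by
  ext p
  by_cases hp : p ∈ S <;> simp [blockSupport, blockRestrict, hp]

theorem wL_blockRestrict_add_wL_sub (a : ∀ ℓ, Fin (n ℓ) → F) (S : Finset (Σ ℓ, Fin (n ℓ))) :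
    wL n lam (blockRestrict n a S) + wL n lam (a - blockRestrict n a S) = wL n lam a := by
  rw [wL_eq_sum_blockSupport, wL_eq_sum_blockSupport, wL_eq_sum_blockSupport,
    blockSupport_blockRestrict, blockSupport_sub_blockRestrict,
    Finset.sum_filter_add_sum_filter_not]

theorem wL_blockRestrict_of_subset {a : ∀ ℓ, Fin (n ℓ) → F} {S : Finset (Σ ℓ, Fin (n ℓ))}
    (hS : S ⊆ blockSupport n a) : wL n lam (blockRestrict n a S) = ∑ p ∈ S, lam p.1 := by
  rw [wL_eq_sum_blockSupport, blockSupport_blockRestrict, Finset.filter_mem_eq_inter,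
    Finset.inter_eq_right.mpr hS]

theorem exists_wL_le_and_wL_sub_add_lt {L t : ℕ} (hL : ∀ ℓ, lam ℓ ≤ L)
    (a : ∀ ℓ, Fin (n ℓ) → F) (ht : t < wL n lam a + L) :
    ∃ r, wL n lam r ≤ t ∧ wL n lam (a - r) + t < wL n lam a + L := by
  rw [wL_eq_sum_blockSupport] at ht
  obtain ⟨S, hSa, hSt, htS⟩ := Finset.exists_subset_sum_le_lt_sum_add
    (fun p : Σ ℓ, Fin (n ℓ) => lam p.1) _ (fun p _ => hL p.1) ht
  have hsplit := wL_blockRestrict_add_wL_sub n lam a S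
  rw [wL_blockRestrict_of_subset n lam hSa] at hsplit
  refine ⟨blockRestrict n a S, ?_, ?_⟩
  · rwa [wL_blockRestrict_of_subset n lam hSa]
  · omega

theorem tauAux_le_max (a r : ∀ ℓ, Fin (n ℓ) → F) :
    tauAux n lam a ≤ max (wL n lam r) (wL n lam (a - r)) :=
  Nat.sInf_le ⟨r, rfl⟩

theorem exists_tauAux_eq_max (a : ∀ ℓ, Fin (n ℓ) → F) :
    ∃ r, tauAux n lam a = max (wL n lam r) (wL n lam (a - r)) :=
  Nat.sInf_mem (s := {x | ∃ r, x = max (wL n lam r) (wL n lam (a - r))}) ⟨_, 0, rfl⟩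

theorem wL_le_two_mul_tauAux (a : ∀ ℓ, Fin (n ℓ) → F) : wL n lam a ≤ 2 * tauAux n lam a := by
  obtain ⟨r, hr⟩ := exists_tauAux_eq_max n lam a
  have := wL_le_add_wL_sub n lam a r
  omega

theorem tauAux_le_half_wL_add {L : ℕ} (hL : ∀ ℓ, lam ℓ ≤ L) (a : ∀ ℓ, Fin (n ℓ) → F) :
    tauAux n lam a ≤ (wL n lam a + L) / 2 := by
  by_cases ha : wL n lam a ≤ (wL n lam a + L) / 2
  · refine (tauAux_le_max n lam a a).trans ?_
    simpa [wL] using ha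
  · obtain ⟨r, hr, hrs⟩ := exists_wL_le_and_wL_sub_add_lt n lam hL a (t := (wL n lam a + L) / 2)
      (by omega)
    exact (tauAux_le_max n lam a r).trans (max_le hr (by omega))

variable {n lam} {C : Submodule F (∀ ℓ, Fin (n ℓ) → F)}

theorem dL_le_wL {c : ∀ ℓ, Fin (n ℓ) → F} (hc : c ∈ C) (hc0 : c ≠ 0) :
    dL n lam C ≤ wL n lam c :=
  Nat.sInf_le ⟨c, hc, hc0, rfl⟩

theorem tL_le_tau {c : ∀ ℓ, Fin (n ℓ) → F} (hc : c ∈ C) (hc0 : c ≠ 0) :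
    tL n lam C ≤ tau n lam c :=
  Nat.sInf_le ⟨c, hc, hc0, rfl⟩

theorem exists_wL_eq_dL (hC : C ≠ ⊥) : ∃ c ∈ C, c ≠ 0 ∧ wL n lam c = dL n lam C := by
  obtain ⟨c, hc, hc0⟩ := (Submodule.ne_bot_iff C).mp hC
  obtain ⟨c', hc', hc0', h⟩ := Nat.sInf_mem (s := {x | ∃ c ∈ C, c ≠ 0 ∧ x = wL n lam c})
    ⟨_, c, hc, hc0, rfl⟩
  exact ⟨c', hc', hc0', h.symm⟩

theorem exists_tau_eq_tL (hC : C ≠ ⊥) : ∃ c ∈ C, c ≠ 0 ∧ tau n lam c = tL n lam C := by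
  obtain ⟨c, hc, hc0⟩ := (Submodule.ne_bot_iff C).mp hC
  obtain ⟨c', hc', hc0', h⟩ := Nat.sInf_mem (s := {x | ∃ c ∈ C, c ≠ 0 ∧ x = tau n lam c})
    ⟨_, c, hc, hc0, rfl⟩
  exact ⟨c', hc', hc0', h.symm⟩

end WeightedHamming

/-- `⌊(d_λ(C)−1)/2⌋ ≤ t_λ(C) ≤ ⌊(d_λ(C)+λ_m)/2⌋ − 1`. -/
theorem tL_bounds_of_dL {m : ℕ} (hm : 0 < m) (n lam : Fin m → ℕ)
    (hmono : Monotone lam)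
    (C : Submodule F (∀ ℓ, Fin (n ℓ) → F)) (hC : C ≠ ⊥) :
    (dL n lam C - 1) / 2 ≤ tL n lam C ∧
      tL n lam C ≤ (dL n lam C + lam ⟨m - 1, by omega⟩) / 2 - 1 := by
  obtain ⟨c₀, hc₀C, hc₀, hwc₀⟩ := exists_wL_eq_dL (lam := lam) hC
  obtain ⟨c₁, hc₁C, hc₁, htc₁⟩ := exists_tau_eq_tL (lam := lam) hC
  have hL : ∀ ℓ, lam ℓ ≤ lam ⟨m - 1, by omega⟩ := fun ℓ => hmono (show ℓ.val ≤ m - 1 by omega)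
  constructor
  · have hd := dL_le_wL (lam := lam) hc₁C hc₁
    have hw := wL_le_two_mul_tauAux n lam c₁
    rw [← htc₁, tau]
    omega
  · have ht := tL_le_tau (lam := lam) hc₀C hc₀
    have hτ := tauAux_le_half_wL_add n lam hL c₀
    rw [tau] at ht
    omega
end

section
/- (Gilbert–Varshamov-type covering bound.) There exists a linear code C ⊆ F_q^n with error-correction capability at least t and dimension dim C ≥ n − ⌈log_q |ΔB_λ(t)|⌉. -/
/-!
Greedy (Gilbert–Varshamov) argument. Take a subspace `C` maximal among those meeting the
difference set `D = ΔB_λ(t)` only in `0`. Since `D` is closed under nonzero scalars, any vector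
outside `C + D` could be adjoined to `C`, so `C + D` is the whole space. Hence
`q ^ n ≤ |C| · |D| = q ^ (dim C) · |D|`, i.e. `dim C ≥ n − ⌈log_q |D|⌉`.
-/

variable {F : Type} [Field F] [Fintype F] [DecidableEq F]

open Pointwise

section CoveringBySubmodule

variable {K V : Type*} [Field K] [AddCommGroup V] [Module K V] {D : Set V}

/-- An element `c + a • v ∈ D` with `a ≠ 0` would exhibit `v = -a⁻¹ • c + a⁻¹ • (c + a • v)`
in `C + D`. -/
theorem Submodule.inter_subset_zero_sup_span_singleton
    (hD : ∀ a : K, a ≠ 0 → ∀ z ∈ D, a • z ∈ D) {C : Submodule K V}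
    (hCD : (C : Set V) ∩ D ⊆ {0}) {v : V} (hv : v ∉ (C : Set V) + D) :
    ((C ⊔ K ∙ v : Submodule K V) : Set V) ∩ D ⊆ {0} := by
  rintro z ⟨hzC, hzD⟩
  obtain ⟨c, hc, w, hw, rfl⟩ := Submodule.mem_sup.mp hzC
  obtain ⟨a, rfl⟩ := Submodule.mem_span_singleton.mp hw
  rcases eq_or_ne a 0 with rfl | ha
  · rw [zero_smul, add_zero] at hzD ⊢
    exact hCD ⟨hc, hzD⟩
  · refine (hv ⟨-(a⁻¹ • c), C.neg_mem (C.smul_mem _ hc), a⁻¹ • (c + a • v),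
      hD _ (inv_ne_zero ha) _ hzD, ?_⟩).elim
    rw [smul_add, smul_smul, inv_mul_cancel₀ ha, one_smul]
    exact neg_add_cancel_left _ _

theorem exists_submodule_inter_subset_zero_and_add_eq_univ [IsNoetherian K V] (hD0 : (0 : V) ∈ D)
    (hD : ∀ a : K, a ≠ 0 → ∀ z ∈ D, a • z ∈ D) :
    ∃ C : Submodule K V, (C : Set V) ∩ D ⊆ {0} ∧ (C : Set V) + D = Set.univ := by
  obtain ⟨C, hCD, hmax⟩ := set_has_maximal_iff_noetherian.mpr ‹_›
    {C : Submodule K V | (C : Set V) ∩ D ⊆ {0}} ⟨⊥, fun z hz => hz.1⟩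
  refine ⟨C, hCD, Set.eq_univ_of_forall fun v => by_contra fun hv => ?_⟩
  have hvC : v ∉ C := fun h => hv ⟨v, h, 0, hD0, add_zero v⟩
  refine hmax _ (Submodule.inter_subset_zero_sup_span_singleton hD hCD hv) (lt_of_le_of_ne
    le_sup_left fun h => hvC ?_)
  exact h ▸ Submodule.mem_sup_right (Submodule.mem_span_singleton_self v)

end CoveringBySubmodule

theorem Nat.sub_clog_le_of_pow_le_pow_mul {b N k d : ℕ} (hb : 1 < b) (h : b ^ N ≤ b ^ k * d) :
    N - Nat.clog b d ≤ k := by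
  have : b ^ N ≤ b ^ (k + Nat.clog b d) :=
    h.trans ((Nat.mul_le_mul_left _ (Nat.le_pow_clog hb d)).trans_eq (pow_add ..).symm)
  have := (Nat.pow_le_pow_iff_right hb).mp this
  omega

omit [Fintype F] in
theorem wL_smul {m : ℕ} (n lam : Fin m → ℕ) {a : F} (ha : a ≠ 0) (x : ∀ ℓ, Fin (n ℓ) → F) :
    wL n lam (a • x) = wL n lam x :=
  Finset.sum_congr rfl fun ℓ _ => congrArg _ <|
    hammingNorm_smul (fun _ => (isUnit_iff_ne_zero.mpr ha).isSMulRegular F) (x ℓ)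

omit [Fintype F] in
theorem zero_mem_dball {m : ℕ} (n lam : Fin m → ℕ) (t : ℕ) :
    (0 : ∀ ℓ, Fin (n ℓ) → F) ∈ dball n lam t :=
  ⟨0, by simp [ball, wL], 0, by simp [ball, wL], (sub_zero 0).symm⟩

omit [Fintype F] in
theorem smul_mem_dball {m : ℕ} (n lam : Fin m → ℕ) (t : ℕ) (a : F) (ha : a ≠ 0)
    (z : ∀ ℓ, Fin (n ℓ) → F) (hz : z ∈ dball n lam t) : a • z ∈ dball n lam t := by
  obtain ⟨x, hx, y, hy, rfl⟩ := hz
  exact ⟨a • x, by rwa [ball, Set.mem_ofPred_eq, wL_smul n lam ha],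
    a • y, by rwa [ball, Set.mem_ofPred_eq, wL_smul n lam ha], smul_sub a x y⟩

theorem covering_bound_general {m : ℕ} (n lam : Fin m → ℕ) (t : ℕ) :
    ∃ C : Submodule F (∀ ℓ, Fin (n ℓ) → F),
      (C : Set (∀ ℓ, Fin (n ℓ) → F)) ∩ dball n lam t = {0} ∧
      (∑ ℓ, n ℓ) -
          Nat.clog (Fintype.card F)
            (Nat.card (dball n lam t : Set (∀ ℓ, Fin (n ℓ) → F))) ≤
        Module.finrank F C := by
  obtain ⟨C, hCD, hcover⟩ := exists_submodule_inter_subset_zero_and_add_eq_univ (K := F)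
    (zero_mem_dball n lam t) (smul_mem_dball n lam t)
  refine ⟨C, hCD.antisymm (by simp [C.zero_mem, zero_mem_dball]), ?_⟩
  have hdim : Module.finrank F (∀ ℓ, Fin (n ℓ) → F) = ∑ ℓ, n ℓ := by
    simp [Module.finrank_pi_fintype]
  have hcard : Fintype.card F ^ (∑ ℓ, n ℓ) ≤ Fintype.card F ^ Module.finrank F C *
      Nat.card (dball n lam t : Set (∀ ℓ, Fin (n ℓ) → F)) := by
    rw [← Nat.card_eq_fintype_card, ← hdim, ← Module.natCard_eq_pow_finrank,
      ← Module.natCard_eq_pow_finrank (V := C), ← Nat.card_univ, ← hcover]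
    exact Set.natCard_add_le
  exact Nat.sub_clog_le_of_pow_le_pow_mul Fintype.one_lt_card hcard

/-- Gilbert–Varshamov-type covering bound: there is a linear code with
error-correction capability at least `t` and dimension at least `n − ⌈log_q |ΔB_λ(t)|⌉`. -/
theorem covering_bound {m : ℕ} (n lam : Fin m → ℕ) (hlam : ∀ ℓ, 1 ≤ lam ℓ) (t : ℕ) :
    ∃ C : Submodule F (∀ ℓ, Fin (n ℓ) → F),
      (C : Set (∀ ℓ, Fin (n ℓ) → F)) ∩ dball n lam t = {0} ∧
      (∑ ℓ, n ℓ) -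
          Nat.clog (Fintype.card F)
            (Nat.card (dball n lam t : Set (∀ ℓ, Fin (n ℓ) → F))) ≤
        Module.finrank F C :=
  covering_bound_general n lam t
end

section
/- (Singleton-type bound for the weighted-Hamming error-correction capability.) Every k-dimensional linear code C ⊆ F_q^n contains a nonzero codeword c whose support is contained in the first n−k+1 coordinates; consequently, letting c* ∈ F_q^n be any vector with c*_i ≠ 0 exactly for i ≤ n−k+1, every k-dimensional linear code satisfies t_λ(C) ≤ τ_λ(c*). -/
variable {F : Type} [Field F] [Fintype F] [DecidableEq F]

/-- Weighted-Hamming weight of `a : Fin n → F`, where coordinate `i` belongs to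
block `B i` and block `ℓ` carries scaling coefficient `lam ℓ`. -/
def wLf (n m : ℕ) (B : Fin n → Fin m) (lam : Fin m → ℕ) (a : Fin n → F) : ℕ :=
  ∑ i, if a i = 0 then 0 else lam (B i)

/-- Error-correction radius `τ_λ(c)`. -/
noncomputable def tauf (n m : ℕ) (B : Fin n → Fin m) (lam : Fin m → ℕ)
    (c : Fin n → F) : ℕ :=
  sInf {x | ∃ r : Fin n → F, x = max (wLf n m B lam r) (wLf n m B lam (c - r))} - 1

/-- Error-correction capability `t_λ(C)` of a linear code. -/
noncomputable def tLf (n m : ℕ) (B : Fin n → Fin m) (lam : Fin m → ℕ)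
    (C : Submodule F (Fin n → F)) : ℕ :=
  sInf {x | ∃ c ∈ C, c ≠ 0 ∧ x = tauf n m B lam c}

/-!
A code of dimension `k` cannot inject into the `k - 1` coordinates `n - k + 1, …, n - 1`,
so some nonzero codeword vanishes there. Its support lies inside that of `c*`, and `τ_λ`
is monotone under support inclusion: an optimal split `c* = r' + (c* - r')` restricts,
coordinatewise, to a split of the smaller codeword with no larger weights.
-/

theorem Submodule.exists_ne_zero_forall_eq_zero_of_card_lt_finrank {K ι : Type*} [Field K]
    [Fintype ι] (C : Submodule K (ι → K)) (s : Finset ι) (hs : s.card < Module.finrank K C) :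
    ∃ c ∈ C, c ≠ 0 ∧ ∀ i ∈ s, c i = 0 := by
  let restrict : C →ₗ[K] (s → K) :=
    (LinearMap.pi fun j : s => LinearMap.proj j.1).comp C.subtype
  have hker : LinearMap.ker restrict ≠ ⊥ :=
    LinearMap.ker_ne_bot_of_finrank_lt (by simpa [Module.finrank_pi] using hs)
  obtain ⟨c, hc, hc0⟩ := (Submodule.ne_bot_iff _).mp hker
  refine ⟨c, c.2, by simpa using hc0, fun i hi => ?_⟩
  simpa [restrict] using congrFun (LinearMap.mem_ker.mp hc) ⟨i, hi⟩

section WeightedHamming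

variable {K : Type} [Field K] [DecidableEq K] (n m : ℕ) (B : Fin n → Fin m) (lam : Fin m → ℕ)

theorem wLf_le_wLf_of_support_subset {a b : Fin n → K} (h : ∀ i, a i ≠ 0 → b i ≠ 0) :
    wLf n m B lam a ≤ wLf n m B lam b := by
  refine Finset.sum_le_sum fun i _ => ?_
  by_cases ha : a i = 0
  · simp [ha]
  · simp [ha, h i ha]

theorem tauf_le_tauf_of_support_subset {c c' : Fin n → K} (h : ∀ i, c i ≠ 0 → c' i ≠ 0) :
    tauf n m B lam c ≤ tauf n m B lam c' := by
  unfold tauf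
  apply Nat.sub_le_sub_right
  refine le_csInf ⟨_, 0, rfl⟩ ?_
  rintro _ ⟨r', rfl⟩
  -- Rescaled so that `r i = c i` wherever `r' i = c' i`, and `r i = 0` wherever `r' i = 0`.
  let r : Fin n → K := fun i => r' i * (c' i)⁻¹ * c i
  have hr : wLf n m B lam r ≤ wLf n m B lam r' :=
    wLf_le_wLf_of_support_subset n m B lam fun i hi h0 => hi (by simp [r, h0])
  have hcr : wLf n m B lam (c - r) ≤ wLf n m B lam (c' - r') := by
    refine wLf_le_wLf_of_support_subset n m B lam fun i hi h0 => hi ?_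
    by_cases hc0 : c i = 0
    · simp [r, hc0]
    · simp [r, (sub_eq_zero.mp h0).symm, h i hc0]
  refine le_trans (Nat.sInf_le ?_) (max_le_max hr hcr)
  exact ⟨r, rfl⟩

theorem tLf_le_tauf_of_mem {C : Submodule K (Fin n → K)} {c : Fin n → K} (hc : c ∈ C)
    (hc0 : c ≠ 0) : tLf n m B lam C ≤ tauf n m B lam c := by
  unfold tLf
  exact Nat.sInf_le ⟨c, hc, hc0, rfl⟩

end WeightedHamming

theorem singleton_bound_tau_general (n m k : ℕ) (B : Fin n → Fin m)
    (lam : Fin m → ℕ)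
    (cstar : Fin n → F) (hc : ∀ i : Fin n, cstar i ≠ 0 ↔ (i : ℕ) < n - k + 1)
    (C : Submodule F (Fin n → F)) (hk : Module.finrank F C = k) (h1 : 1 ≤ k) :
    (∃ c ∈ C, c ≠ 0 ∧ ∀ i : Fin n, n - k + 1 ≤ (i : ℕ) → c i = 0) ∧
      tLf n m B lam C ≤ tauf n m B lam cstar := by
  have hcard :
      (Finset.univ.filter fun i : Fin n => n - k + 1 ≤ (i : ℕ)).card < Module.finrank F C := by
    rw [hk]
    have := Finset.card_filter_add_card_filter_not (s := Finset.univ)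
      (fun i : Fin n => (i : ℕ) < n - k + 1)
    simp only [Fin.card_filter_val_lt, not_lt, Finset.card_univ, Fintype.card_fin] at this
    omega
  obtain ⟨c, hcC, hc0, hvanish⟩ :=
    C.exists_ne_zero_forall_eq_zero_of_card_lt_finrank _ hcard
  have hsupp : ∀ i : Fin n, n - k + 1 ≤ (i : ℕ) → c i = 0 := fun i hi =>
    hvanish i (by simpa using hi)
  refine ⟨⟨c, hcC, hc0, hsupp⟩, (tLf_le_tauf_of_mem n m B lam hcC hc0).trans ?_⟩
  exact tauf_le_tauf_of_support_subset n m B lam fun i hi =>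
    (hc i).mpr (not_le.mp fun hle => hi (hsupp i hle))

/-- Singleton-type bound: every `k`-dimensional code contains a nonzero
codeword supported on the first `n − k + 1` coordinates, and hence for any `c*`
whose support is exactly the first `n − k + 1` coordinates, `t_λ(C) ≤ τ_λ(c*)`. -/
theorem singleton_bound_tau (n m k : ℕ) (B : Fin n → Fin m) (hB : Monotone B)
    (lam : Fin m → ℕ) (hlam : Monotone lam)
    (cstar : Fin n → F) (hc : ∀ i : Fin n, cstar i ≠ 0 ↔ (i : ℕ) < n - k + 1)
    (C : Submodule F (Fin n → F)) (hk : Module.finrank F C = k) (h1 : 1 ≤ k) :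
    (∃ c ∈ C, c ≠ 0 ∧ ∀ i : Fin n, n - k + 1 ≤ (i : ℕ) → c i = 0) ∧
      tLf n m B lam C ≤ tauf n m B lam cstar :=
  singleton_bound_tau_general n m k B lam cstar hc C hk h1
end

section
/- (Distance bound for generalized concatenated codes, single-level case, i.e., concatenation.) Let A ⊆ F_q^{m_1} × ... × F_q^{m_m} be an F_q-linear polyalphabetic outer code with minimum Hamming distance d_H(A) (counting nonzero block-symbols), and for each ℓ let B_ℓ ⊆ F_q^{n_ℓ} be a linear inner code of dimension m_ℓ with injective linear encoder. Then the concatenated code C = {(B_1.enc(a_1),...,B_m.enc(a_m)) : a ∈ A} ⊆ F_q^n has minimum weighted-Hamming distance d_λ(C) ≥ Σ_{ℓ=1}^{d_H(A)} σ_ℓ, where σ_1 ≤ σ_2 ≤ ... ≤ σ_m is the sorted sequence of the values λ_ℓ · d_H(B_ℓ). -/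
variable {F : Type} [Field F] [Fintype F] [DecidableEq F]

section Concatenated

variable {m : ℕ} (nn md lam : Fin m → ℕ)
variable (enc : ∀ ℓ, (Fin (md ℓ) → F) →ₗ[F] (Fin (nn ℓ) → F))
variable (A : Submodule F (∀ ℓ, Fin (md ℓ) → F))

/-- The concatenated code `C = {(enc_1(a_1), …, enc_m(a_m)) : a ∈ A}`. -/
def ccode : Set (∀ ℓ, Fin (nn ℓ) → F) :=
  {c | ∃ a ∈ A, c = fun ℓ => enc ℓ (a ℓ)}

/-- Minimum (block-symbol) Hamming distance of the polyalphabetic outer code `A`. -/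
noncomputable def dHA : ℕ :=
  sInf {x | ∃ a ∈ A, a ≠ 0 ∧ x = (Finset.univ.filter fun ℓ => a ℓ ≠ 0).card}

/-- Minimum Hamming distance of the inner code `B_ℓ = range (enc ℓ)`. -/
noncomputable def dHB (ℓ : Fin m) : ℕ :=
  sInf {x | ∃ v ∈ Set.range (enc ℓ), v ≠ 0 ∧ x = hammingNorm v}

/-- Minimum weighted-Hamming distance of a (not necessarily linear) set of vectors. -/
noncomputable def dLset (S : Set (∀ ℓ, Fin (nn ℓ) → F)) : ℕ :=
  sInf {x | ∃ c ∈ S, c ≠ 0 ∧ x = wL nn lam c}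

/-- Error-correction capability of a set of vectors. -/
noncomputable def tLset (S : Set (∀ ℓ, Fin (nn ℓ) → F)) : ℕ :=
  sInf {x | ∃ c ∈ S, c ≠ 0 ∧ x = tau nn lam c}

/-- Sum of the `d_H(A)` smallest values among `{λ_ℓ · d_H(B_ℓ)}`
(i.e. `σ_1 + … + σ_{d_H(A)}` for the sorted sequence `σ_1 ≤ … ≤ σ_m`). -/
noncomputable def sortedSum : ℕ :=
  (((Finset.univ.val.map fun ℓ => lam ℓ * dHB nn md enc ℓ).sort (· ≤ ·)).take
    (dHA md A)).sum

end Concatenated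

/-! A nonzero `a ∈ A` has at least `d_H(A)` nonzero blocks, and on each of them the injective
encoder produces a nonzero word of `B_ℓ`, of weighted weight at least `λ_ℓ d_H(B_ℓ)`. Summing
over any `k ≥ d_H(A)` of the values `λ_ℓ d_H(B_ℓ)` gives at least the sum of the `d_H(A)` smallest
ones, because the sorted values of a submultiset dominate, position by position, the sorted
values of the whole multiset. -/

namespace List

variable {α : Type*}

theorem Sublist.getElem_le_getElem_of_pairwise [Preorder α] {l l' : List α}
    (h : l' <+ l) (hl : l.Pairwise (· ≤ ·)) (i : ℕ) (hi : i < l'.length) :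
    l[i]'(hi.trans_le h.length_le) ≤ l'[i] := by
  induction h generalizing i with
  | slnil => simp at hi
  | @cons l' l a h ih =>
    have hi' : i + 1 < (a :: l).length := by simpa using hi.trans_le h.length_le
    calc (a :: l)[i] ≤ (a :: l)[i + 1] :=
          hl.rel_get_of_le (a := ⟨i, by omega⟩) (b := ⟨i + 1, hi'⟩) (by simp)
      _ ≤ l'[i] := ih hl.of_cons i hi
  | cons_cons a h ih =>
    cases i with
    | zero => exact le_rfl
    | succ i => exact ih hl.of_cons i (by simpa using hi)

theorem Sublist.sum_take_le_sum_take_of_pairwise [AddMonoid α] [Preorder α] [AddRightMono α]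
    [AddLeftMono α] {l l' : List α} (h : l' <+ l) (hl : l.Pairwise (· ≤ ·)) {d : ℕ}
    (hd : d ≤ l'.length) : (l.take d).sum ≤ (l'.take d).sum := by
  have := h.length_le
  refine Forall₂.sum_le_sum (forall₂_of_length_eq_of_get ?_ fun i h₁ h₂ => ?_)
  · simp; omega
  · simpa using h.getElem_le_getElem_of_pairwise hl i (by simp at h₂; omega)

end List

namespace Multiset

variable {α : Type*} [LinearOrder α] [AddCommMonoid α] [IsOrderedAddMonoid α]
  [CanonicallyOrderedAdd α]

theorem sum_take_sort_le_sum_of_le {s t : Multiset α} (hst : s ≤ t) {d : ℕ} (hd : d ≤ card s) :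
    ((t.sort (· ≤ ·)).take d).sum ≤ s.sum := by
  have hsub : (s.sort (· ≤ ·)).Sublist (t.sort (· ≤ ·)) :=
    List.sublist_of_subperm_of_pairwise (by rwa [← coe_le, sort_eq, sort_eq])
      (pairwise_sort _ _) (pairwise_sort _ _)
  calc ((t.sort (· ≤ ·)).take d).sum ≤ ((s.sort (· ≤ ·)).take d).sum :=
        hsub.sum_take_le_sum_take_of_pairwise (pairwise_sort _ _) (by simpa using hd)
    _ ≤ (s.sort (· ≤ ·)).sum := (List.take_sublist _ _).sum_le_sum fun _ _ => _root_.zero_le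
    _ = s.sum := by rw [← sum_coe, sort_eq]

end Multiset

section Concatenated

variable {m : ℕ} {nn md : Fin m → ℕ} (lam : Fin m → ℕ)
  {enc : ∀ ℓ, (Fin (md ℓ) → F) →ₗ[F] (Fin (nn ℓ) → F)} {A : Submodule F (∀ ℓ, Fin (md ℓ) → F)}

theorem encode_ne_zero (hinj : ∀ ℓ, Function.Injective (enc ℓ)) {a : ∀ ℓ, Fin (md ℓ) → F}
    (ha : a ≠ 0) : (fun ℓ => enc ℓ (a ℓ)) ≠ 0 := by
  contrapose! ha
  funext ℓ
  exact (map_eq_zero_iff _ (hinj ℓ)).mp (congrFun ha ℓ)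

theorem dHB_le_hammingNorm {ℓ : Fin m} {v : Fin (md ℓ) → F} (hv : enc ℓ v ≠ 0) :
    dHB nn md enc ℓ ≤ hammingNorm (enc ℓ v) :=
  Nat.sInf_le ⟨_, ⟨v, rfl⟩, hv, rfl⟩

theorem dHA_le_card_filter_ne_zero {a : ∀ ℓ, Fin (md ℓ) → F} (ha : a ∈ A) (ha₀ : a ≠ 0) :
    dHA md A ≤ (Finset.univ.filter fun ℓ => a ℓ ≠ 0).card :=
  Nat.sInf_le ⟨a, ha, ha₀, rfl⟩

theorem dHA_bot : dHA md (⊥ : Submodule F (∀ ℓ, Fin (md ℓ) → F)) = 0 := by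
  have hempty : {x | ∃ a ∈ (⊥ : Submodule F (∀ ℓ, Fin (md ℓ) → F)), a ≠ 0 ∧
      x = (Finset.univ.filter fun ℓ => a ℓ ≠ 0).card} = ∅ := by
    ext x
    simp
  rw [dHA, hempty, Nat.sInf_empty]

theorem sortedSum_le_sum {s : Finset (Fin m)} (hs : dHA md A ≤ s.card) :
    sortedSum nn md lam enc A ≤ ∑ ℓ ∈ s, lam ℓ * dHB nn md enc ℓ :=
  Multiset.sum_take_sort_le_sum_of_le
    (Multiset.map_le_map (Finset.val_le_iff.mpr s.subset_univ)) (by simpa using hs)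

theorem sum_dHB_le_wL (hinj : ∀ ℓ, Function.Injective (enc ℓ)) (a : ∀ ℓ, Fin (md ℓ) → F) :
    ∑ ℓ ∈ Finset.univ.filter (fun ℓ => a ℓ ≠ 0), lam ℓ * dHB nn md enc ℓ ≤
      wL nn lam (fun ℓ => enc ℓ (a ℓ)) :=
  calc ∑ ℓ ∈ Finset.univ.filter (fun ℓ => a ℓ ≠ 0), lam ℓ * dHB nn md enc ℓ
      ≤ ∑ ℓ ∈ Finset.univ.filter (fun ℓ => a ℓ ≠ 0), lam ℓ * hammingNorm (enc ℓ (a ℓ)) :=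
        Finset.sum_le_sum fun ℓ hℓ => Nat.mul_le_mul_left _ <| dHB_le_hammingNorm <|
          (map_ne_zero_iff _ (hinj ℓ)).mpr (Finset.mem_filter.mp hℓ).2
    _ ≤ wL nn lam (fun ℓ => enc ℓ (a ℓ)) :=
        Finset.sum_le_sum_of_subset (Finset.filter_subset _ _)

theorem sortedSum_le_wL (hinj : ∀ ℓ, Function.Injective (enc ℓ)) {a : ∀ ℓ, Fin (md ℓ) → F}
    (ha : a ∈ A) (ha₀ : a ≠ 0) :
    sortedSum nn md lam enc A ≤ wL nn lam (fun ℓ => enc ℓ (a ℓ)) :=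
  (sortedSum_le_sum lam (dHA_le_card_filter_ne_zero ha ha₀)).trans (sum_dHB_le_wL lam hinj a)

end Concatenated

/-- distance bound for concatenated codes:
`d_λ(C) ≥ σ_1 + … + σ_{d_H(A)}` where `σ` sorts the values `λ_ℓ d_H(B_ℓ)`. -/
theorem concat_distance_bound {m : ℕ} (nn md lam : Fin m → ℕ)
    (enc : ∀ ℓ, (Fin (md ℓ) → F) →ₗ[F] (Fin (nn ℓ) → F))
    (hinj : ∀ ℓ, Function.Injective (enc ℓ))
    (A : Submodule F (∀ ℓ, Fin (md ℓ) → F)) :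
    sortedSum nn md lam enc A ≤ dLset nn lam (ccode nn md enc A) := by
  rcases eq_or_ne A ⊥ with rfl | hA
  · simp [sortedSum, dHA_bot]
  obtain ⟨a, ha, ha₀⟩ := Submodule.exists_mem_ne_zero_of_ne_bot hA
  refine le_csInf ⟨_, _, ⟨a, ha, rfl⟩, encode_ne_zero hinj ha₀, rfl⟩ ?_
  rintro _ ⟨_, ⟨b, hb, rfl⟩, hb₀, rfl⟩
  exact sortedSum_le_wL lam hinj hb fun h => hb₀ (by subst h; funext ℓ; exact map_zero _)
end

section
/- For any c ∈ F_q^n, τ_λ(c) + 1 equals the minimum over all partitions of the support of c into two parts S, T of max{w_λ(c|_S), w_λ(c|_T)}; in particular the minimizing r in the definition of τ_λ(c) can be taken with r_i ∈ {0, c_i} for every coordinate i. -/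
variable {F : Type} [Field F] [Fintype F] [DecidableEq F]

set_option linter.unusedSectionVars false in
lemma wL_mono {m : ℕ} (n lam : Fin m → ℕ) (a b : ∀ ℓ, Fin (n ℓ) → F)
    (h : ∀ ℓ i, a ℓ i ≠ 0 → b ℓ i ≠ 0) : wL n lam a ≤ wL n lam b := by
  refine Finset.sum_le_sum fun ℓ _ => Nat.mul_le_mul_left _ ?_
  exact Finset.card_le_card (fun i hi => by
    simp only [Finset.mem_filter, Finset.mem_univ, true_and] at *
    exact h ℓ i hi)

/-- `τ_λ(c) + 1` (i.e. `min_r max{w_λ(r), w_λ(c−r)}`) equals the minimum,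
over partitions of the support of `c` into parts `S` and its complement, of
`max{w_λ(c|_S), w_λ(c|_{Sᶜ})}`; in particular a minimizing `r` exists with
`r_i ∈ {0, c_i}` for every coordinate `i`. -/
theorem tauAux_eq_partition {m : ℕ} (n lam : Fin m → ℕ) (hlam : ∀ ℓ, 1 ≤ lam ℓ)
    (c : ∀ ℓ, Fin (n ℓ) → F) :
    tauAux n lam c =
      sInf {x | ∃ S : ∀ ℓ, Finset (Fin (n ℓ)),
        x = max (wL n lam fun ℓ i => if i ∈ S ℓ then c ℓ i else 0)
                (wL n lam fun ℓ i => if i ∈ S ℓ then 0 else c ℓ i)} ∧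
    ∃ r : ∀ ℓ, Fin (n ℓ) → F, (∀ ℓ i, r ℓ i = 0 ∨ r ℓ i = c ℓ i) ∧
      max (wL n lam r) (wL n lam (c - r)) = tauAux n lam c := by
  set A : Set ℕ := {x | ∃ r : ∀ ℓ, Fin (n ℓ) → F, x = max (wL n lam r) (wL n lam (c - r))}
  set B : Set ℕ := {x | ∃ S : ∀ ℓ, Finset (Fin (n ℓ)),
        x = max (wL n lam fun ℓ i => if i ∈ S ℓ then c ℓ i else 0)
                (wL n lam fun ℓ i => if i ∈ S ℓ then 0 else c ℓ i)}
  -- for any S, the restriction gives an element of A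
  have key : ∀ S : ∀ ℓ, Finset (Fin (n ℓ)),
      (max (wL n lam fun ℓ i => if i ∈ S ℓ then c ℓ i else 0)
           (wL n lam fun ℓ i => if i ∈ S ℓ then 0 else c ℓ i)) ∈ A := by
    intro S
    refine ⟨fun ℓ i => if i ∈ S ℓ then c ℓ i else 0, ?_⟩
    have : c - (fun ℓ i => if i ∈ S ℓ then c ℓ i else 0)
        = fun ℓ i => if i ∈ S ℓ then 0 else c ℓ i := by
      funext ℓ i
      by_cases h : i ∈ S ℓ <;> simp [h]
    rw [this]
  have hAne : A.Nonempty := ⟨_, key fun _ => ∅⟩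
  have hBne : B.Nonempty := ⟨_, fun _ => ∅, rfl⟩
  -- sInf A ≤ sInf B
  have h1 : sInf A ≤ sInf B := by
    obtain ⟨S, hS⟩ := Nat.sInf_mem hBne
    rw [hS]
    exact Nat.sInf_le (key S)
  -- sInf B ≤ sInf A
  have h2 : sInf B ≤ sInf A := by
    obtain ⟨r, hr⟩ := Nat.sInf_mem hAne
    set S : ∀ ℓ, Finset (Fin (n ℓ)) := fun ℓ => {i | r ℓ i ≠ 0}
    have hmem : ∀ ℓ i, i ∈ S ℓ ↔ r ℓ i ≠ 0 := by
      intro ℓ i; simp [S]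
    have hle1 : wL n lam (fun ℓ i => if i ∈ S ℓ then c ℓ i else 0) ≤ wL n lam r := by
      refine wL_mono n lam _ _ fun ℓ i hi => ?_
      by_cases h : i ∈ S ℓ
      · exact (hmem ℓ i).1 h
      · simp [h] at hi
    have hle2 : wL n lam (fun ℓ i => if i ∈ S ℓ then 0 else c ℓ i) ≤ wL n lam (c - r) := by
      refine wL_mono n lam _ _ fun ℓ i hi => ?_
      by_cases h : i ∈ S ℓ
      · simp [h] at hi
      · have hr0 : r ℓ i = 0 := by
          by_contra hc; exact h ((hmem ℓ i).2 hc)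
        simp [h] at hi
        show c ℓ i - r ℓ i ≠ 0
        simpa [hr0]
    calc sInf B ≤ _ := Nat.sInf_le ⟨S, rfl⟩
      _ ≤ max (wL n lam r) (wL n lam (c - r)) := max_le_max hle1 hle2
      _ = sInf A := hr.symm
  have hEq : sInf A = sInf B := le_antisymm h1 h2
  refine ⟨hEq, ?_⟩
  obtain ⟨S, hS⟩ := Nat.sInf_mem hBne
  refine ⟨fun ℓ i => if i ∈ S ℓ then c ℓ i else 0, fun ℓ i => ?_, ?_⟩
  · by_cases h : i ∈ S ℓ <;> simp [h]
  · have : c - (fun ℓ i => if i ∈ S ℓ then c ℓ i else 0)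
        = fun ℓ i => if i ∈ S ℓ then 0 else c ℓ i := by
      funext ℓ i
      by_cases h : i ∈ S ℓ <;> simp [h]
    rw [this, ← hS]
    exact hEq.symm
end
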